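/- (Fisher–Nemhauser–Wolsey; the n = 1 case of Theorem 4.1) Let f be a normalized monotone submodular function on a finite set M and I a p-system on M. Let S be the set built by the greedy algorithm that starts from ∅ and repeatedly adds an item x with S ∪ {x} ∈ I maximizing the marginal f(x | S), stopping when no item can be feasibly added. Then f(S) ≥ (1/(p + 1)) · max_{T ∈ I} f(T). -/
import Mathlib


open Finset

/-- A set function on subsets of a finite ground set is submodular if the marginal value of any
item with respect to a smaller set is at least its marginal value with respect to a larger set. -/
def Submodular {α : Type*} [DecidableEq α] (f : Finset α → ℝ) : Prop :=
  ∀ ⦃S T : Finset α⦄, S ⊆ T → ∀ ⦃x : α⦄, x ∉ T →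
    f (insert x T) - f T ≤ f (insert x S) - f S

/-- `A` is a basis of `S` w.r.t. the independence predicate `Indep`:
a maximal independent subset of `S`. -/
def IsBasisIn {α : Type*} [DecidableEq α] (Indep : Finset α → Prop) (S A : Finset α) : Prop :=
  A ⊆ S ∧ Indep A ∧ ∀ x ∈ S, x ∉ A → ¬ Indep (insert x A)

/-- The greedy solution after `r` steps: the set of the first `r` greedily chosen elements. -/
def solAt {α : Type*} [DecidableEq α] (pick : ℕ → α) (r : ℕ) : Finset α :=
  (Finset.range r).image pick

lemma solAt_succ {α : Type*} [DecidableEq α] (pick : ℕ → α) (r : ℕ) :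
    solAt pick (r + 1) = insert (pick r) (solAt pick r) := by
  simp [solAt, Finset.range_add_one]

lemma solAt_mono {α : Type*} [DecidableEq α] (pick : ℕ → α) {i j : ℕ} (h : i ≤ j) :
    solAt pick i ⊆ solAt pick j :=
  Finset.image_subset_image (Finset.range_subset_range.2 h)

lemma card_solAt_le {α : Type*} [DecidableEq α] (pick : ℕ → α) (r : ℕ) :
    (solAt pick r).card ≤ r :=
  (Finset.card_image_le).trans (by simp)

lemma exists_basis_superset {α : Type*} [DecidableEq α] (Indep : Finset α → Prop)
    (G A : Finset α) (hA : Indep A) (hAG : A ⊆ G) :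
    ∃ B, A ⊆ B ∧ IsBasisIn Indep G B := by
  classical
  by_cases h : ∀ x ∈ G, x ∉ A → ¬ Indep (insert x A)
  · exact ⟨A, Finset.Subset.refl _, hAG, hA, h⟩
  · push_neg at h
    obtain ⟨x, hxG, hxA, hxI⟩ := h
    obtain ⟨B, hB1, hB2⟩ := exists_basis_superset Indep G (insert x A) hxI
      (Finset.insert_subset hxG hAG)
    exact ⟨B, (Finset.subset_insert _ _).trans hB1, hB2⟩
termination_by (G \ A).card
decreasing_by
  apply Finset.card_lt_card
  refine ⟨Finset.sdiff_subset_sdiff (Finset.Subset.refl _) (Finset.subset_insert _ _), ?_⟩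
  intro hsub
  have : x ∈ G \ A := Finset.mem_sdiff.2 ⟨hxG, hxA⟩
  have := hsub this
  simp at this

lemma union_marginal {α : Type*} [DecidableEq α] {f : Finset α → ℝ} (hsub : Submodular f) :
    ∀ (D B : Finset α), Disjoint D B →
      f (B ∪ D) ≤ f B + ∑ x ∈ D, (f (insert x B) - f B) := by
  classical
  intro D
  induction D using Finset.induction with
  | empty => simp
  | @insert a D ha ih =>
    intro B hdisj
    have haB : a ∉ B := by
      intro h
      exact (Finset.disjoint_left.1 hdisj (Finset.mem_insert_self a D)) h
    have haBD : a ∉ B ∪ D := by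
      simp only [Finset.mem_union, not_or]
      exact ⟨haB, ha⟩
    have h1 : f (B ∪ insert a D) = f (insert a (B ∪ D)) := by
      rw [Finset.union_insert]
    have h2 : f (insert a (B ∪ D)) - f (B ∪ D) ≤ f (insert a B) - f B :=
      hsub Finset.subset_union_left haBD
    have h3 := ih B (hdisj.mono_left (Finset.subset_insert _ _))
    rw [Finset.sum_insert ha, h1]
    linarith

lemma abel_bound (p : ℝ) (c d : ℕ → ℝ) (hd0 : ∀ k, 0 ≤ d k)
    (hdmono : ∀ k, d (k + 1) ≤ d k)
    (hcmono : ∀ k, c k ≤ c (k + 1)) (hcp : ∀ k, c k ≤ p * k) (hc0 : c 0 = 0) :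
    ∀ n, ∑ k ∈ Finset.range n, (c (k + 1) - c k) * d k ≤ p * ∑ k ∈ Finset.range n, d k := by
  have key : ∀ n, ∑ k ∈ Finset.range n, (c (k + 1) - c k) * d k ≤
      p * ∑ k ∈ Finset.range n, d k - (p * n - c n) * d n := by
    intro n
    induction n with
    | zero => simp [hc0]
    | succ n ih =>
      rw [Finset.sum_range_succ, Finset.sum_range_succ]
      have hslack : (p * (n + 1) - c (n + 1)) * d (n + 1) ≤ (p * (n + 1) - c (n + 1)) * d n := by
        apply mul_le_mul_of_nonneg_left (hdmono n)
        have := hcp (n + 1)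
        push_cast
        push_cast at this
        linarith
      push_cast
      push_cast at ih
      nlinarith [hd0 n, hd0 (n + 1)]
  intro n
  have h1 := key n
  have h2 : 0 ≤ (p * n - c n) * d n := by
    apply mul_nonneg _ (hd0 n)
    have := hcp n
    linarith
  linarith


/-- Fisher–Nemhauser–Wolsey (the `n = 1` case of Theorem 4.1): let `f` be a normalized monotone
submodular function on a finite ground set and `Indep` a `p`-system. Let `S = solAt pick s` be the
set built by the greedy algorithm that starts from `∅` and repeatedly adds an unused item `x` with
`S ∪ {x}` independent maximizing the marginal `f(x | S)`, stopping when no item can be feasibly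
added. Then `f(S) ≥ (1/(p + 1)) · max_{T ∈ I} f(T)`. -/
theorem stmt_17 {α : Type*} [DecidableEq α] [Fintype α]
    (f : Finset α → ℝ) (Indep : Finset α → Prop) (p : ℝ) (hp : 1 ≤ p)
    (hnorm : f ∅ = 0)
    (hmono : ∀ ⦃S T : Finset α⦄, S ⊆ T → f S ≤ f T)
    (hsub : Submodular f)
    (hempty : Indep ∅)
    (hdown : ∀ ⦃X Y : Finset α⦄, X ⊆ Y → Indep Y → Indep X)
    (hPsys : ∀ S A B : Finset α, IsBasisIn Indep S A → IsBasisIn Indep S B →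
      (B.card : ℝ) ≤ p * (A.card : ℝ))
    (s : ℕ) (pick : ℕ → α)
    (hnew : ∀ r < s, pick r ∉ solAt pick r)
    (hfeas : ∀ r < s, Indep (insert (pick r) (solAt pick r)))
    (hgreedy : ∀ r < s, ∀ x : α, x ∉ solAt pick r → Indep (insert x (solAt pick r)) →
      f (insert x (solAt pick r)) - f (solAt pick r) ≤
        f (insert (pick r) (solAt pick r)) - f (solAt pick r))
    (hstop : ∀ x : α, x ∉ solAt pick s → ¬ Indep (insert x (solAt pick s)))
    (T : Finset α) (hT : Indep T) :
    (1 / (p + 1)) * f T ≤ f (solAt pick s) := by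
  classical
  have hp0 : (0:ℝ) ≤ p := by linarith
  set Ss := solAt pick s with hSs
  -- independence of all prefixes
  have hIndepS : ∀ j ≤ s, Indep (solAt pick j) := by
    intro j hj
    cases j with
    | zero => simpa [solAt] using hempty
    | succ j =>
      rw [solAt_succ]
      exact hfeas j (by omega)
  -- the "blocked at step j" sets
  set Tc : ℕ → Finset α :=
    fun j => (T \ Ss).filter (fun x => ¬ Indep (insert x (solAt pick j))) with hTc
  have hTcmono : ∀ j, Tc j ⊆ Tc (j + 1) := by
    intro j x hx
    rw [hTc, Finset.mem_filter] at hx ⊢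
    refine ⟨hx.1, fun hI => hx.2 ?_⟩
    exact hdown (Finset.insert_subset_insert _ (solAt_mono pick (Nat.le_succ j))) hI
  have hTcmono' : ∀ {i j}, i ≤ j → Tc i ⊆ Tc j := by
    intro i j hij
    induction j with
    | zero => simp_all
    | succ j ih =>
      rcases Nat.lt_or_ge i (j+1) with h | h
      · exact (ih (by omega)).trans (hTcmono j)
      · have : i = j + 1 := by omega
        subst this; exact Finset.Subset.refl _
  have hTc0 : Tc 0 = ∅ := by
    rw [hTc]
    apply Finset.filter_false_of_mem
    intro x hx
    simp only [not_not]
    have hxT : x ∈ T := (Finset.mem_sdiff.1 hx).1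
    have : insert x (solAt pick 0) = {x} := by simp [solAt]
    rw [this]
    exact hdown (Finset.singleton_subset_iff.2 hxT) hT
  have hTcs : Tc s = T \ Ss := by
    rw [hTc]
    apply Finset.filter_true_of_mem
    intro x hx
    exact hstop x (Finset.mem_sdiff.1 hx).2
  -- cardinality bound from the p-system property
  have hcard : ∀ j ≤ s, ((Tc j).card : ℝ) ≤ p * j := by
    intro j hj
    set G := solAt pick j ∪ Tc j with hG
    have hbasis1 : IsBasisIn Indep G (solAt pick j) := by
      refine ⟨Finset.subset_union_left, hIndepS j hj, ?_⟩
      intro x hxG hxS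
      have hxTc : x ∈ Tc j := by
        rcases Finset.mem_union.1 hxG with h | h
        · exact absurd h hxS
        · exact h
      exact (Finset.mem_filter.1 hxTc).2
    have hTcIndep : Indep (Tc j) := by
      apply hdown _ hT
      exact (Finset.filter_subset _ _).trans (Finset.sdiff_subset)
    obtain ⟨B, hB1, hB2⟩ := exists_basis_superset Indep G (Tc j) hTcIndep
      Finset.subset_union_right
    have h1 : ((Tc j).card : ℝ) ≤ (B.card : ℝ) := by
      exact_mod_cast Finset.card_le_card hB1
    have h2 := hPsys G (solAt pick j) B hbasis1 hB2
    have h3 : ((solAt pick j).card : ℝ) ≤ (j : ℝ) := by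
      exact_mod_cast card_solAt_le pick j
    calc ((Tc j).card : ℝ) ≤ (B.card : ℝ) := h1
      _ ≤ p * ((solAt pick j).card : ℝ) := h2
      _ ≤ p * j := by apply mul_le_mul_of_nonneg_left h3 hp0
  -- gains sequence
  set d : ℕ → ℝ := fun k => f (solAt pick (min (k + 1) s)) - f (solAt pick (min k s)) with hd
  have hd0 : ∀ k, 0 ≤ d k := by
    intro k
    have := hmono (solAt_mono pick (min_le_min_right s (Nat.le_succ k)))
    simp only [hd]
    linarith
  have hdlt : ∀ k, k < s → d k = f (insert (pick k) (solAt pick k)) - f (solAt pick k) := by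
    intro k hk
    have h1 : min (k + 1) s = k + 1 := by omega
    have h2 : min k s = k := by omega
    rw [hd]
    simp only [h1, h2, solAt_succ]
  have hdge : ∀ k, s ≤ k → d k = 0 := by
    intro k hk
    have h1 : min (k + 1) s = s := by omega
    have h2 : min k s = s := by omega
    simp only [hd, h1, h2, sub_self]
  have hdmono : ∀ k, d (k + 1) ≤ d k := by
    intro k
    rcases Nat.lt_or_ge (k + 1) s with h | h
    · rw [hdlt (k+1) h, hdlt k (by omega)]
      have hx1 : pick (k+1) ∉ solAt pick (k + 1) := hnew (k+1) h
      have hx0 : pick (k+1) ∉ solAt pick k := fun hc => hx1 (solAt_mono pick (Nat.le_succ k) hc)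
      have hI : Indep (insert (pick (k+1)) (solAt pick k)) :=
        hdown (Finset.insert_subset_insert _ (solAt_mono pick (Nat.le_succ k))) (hfeas (k+1) h)
      have h1 : f (insert (pick (k+1)) (solAt pick (k+1))) - f (solAt pick (k+1)) ≤
          f (insert (pick (k+1)) (solAt pick k)) - f (solAt pick k) :=
        hsub (solAt_mono pick (Nat.le_succ k)) hx1
      have h2 := hgreedy k (by omega) (pick (k+1)) hx0 hI
      linarith
    · rw [hdge (k+1) h]
      exact hd0 k
  -- counting sequence
  set c : ℕ → ℝ := fun k => ((Tc (min k s)).card : ℝ) with hc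
  have hcmono : ∀ k, c k ≤ c (k + 1) := by
    intro k
    simp only [hc]
    exact_mod_cast Finset.card_le_card (hTcmono' (min_le_min_right s (Nat.le_succ k)))
  have hcp : ∀ k, c k ≤ p * k := by
    intro k
    calc c k ≤ p * (min k s) := hcard _ (min_le_right k s)
      _ ≤ p * k := by
          apply mul_le_mul_of_nonneg_left _ hp0
          exact_mod_cast min_le_left k s
  have hc0 : c 0 = 0 := by
    simp only [hc, Nat.zero_min, hTc0, Finset.card_empty, Nat.cast_zero]
  -- telescoping sum of gains
  have hsum_d : ∑ k ∈ Finset.range s, d k = f Ss := by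
    have : ∀ k ∈ Finset.range s, d k =
        f (solAt pick (k+1)) - f (solAt pick k) := by
      intro k hk
      rw [Finset.mem_range] at hk
      have h1 : min (k + 1) s = k + 1 := by omega
      have h2 : min k s = k := by omega
      simp only [hd, h1, h2]
    rw [Finset.sum_congr rfl this, Finset.sum_range_sub (fun k => f (solAt pick k))]
    have h0 : solAt pick 0 = ∅ := by simp [solAt]
    rw [h0, hnorm, hSs, sub_zero]
  -- the marginal-sum bound by induction
  have hkey : ∀ j ≤ s, ∑ x ∈ Tc j, (f (insert x Ss) - f Ss) ≤
      ∑ k ∈ Finset.range j, (c (k+1) - c k) * d k := by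
    intro j hj
    induction j with
    | zero => simp [hTc0]
    | succ j ih =>
      have hj' : j ≤ s := by omega
      have hjs : j < s := by omega
      have hsplit := Finset.sum_sdiff (f := fun x => f (insert x Ss) - f Ss) (hTcmono j)
      have hbound : ∀ x ∈ Tc (j+1) \ Tc j, f (insert x Ss) - f Ss ≤ d j := by
        intro x hx
        rw [Finset.mem_sdiff] at hx
        obtain ⟨hx1, hx2⟩ := hx
        have hxTS : x ∈ T \ Ss := (Finset.mem_filter.1 hx1).1
        have hxSs : x ∉ Ss := (Finset.mem_sdiff.1 hxTS).2
        have hxSj : x ∉ solAt pick j := fun hc => hxSs (solAt_mono pick hj' hc)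
        have hxI : Indep (insert x (solAt pick j)) := by
          by_contra hcon
          exact hx2 (Finset.mem_filter.2 ⟨hxTS, hcon⟩)
        have h1 : f (insert x Ss) - f Ss ≤ f (insert x (solAt pick j)) - f (solAt pick j) :=
          hsub (solAt_mono pick hj') hxSs
        have h2 := hgreedy j hjs x hxSj hxI
        rw [hdlt j hjs]
        linarith
      have hcardeq : ((Tc (j+1) \ Tc j).card : ℝ) = c (j+1) - c j := by
        rw [Finset.card_sdiff_of_subset (hTcmono j)]
        have hle := Finset.card_le_card (hTcmono j)
        simp only [hc]
        have h1 : min (j+1) s = j + 1 := by omega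
        have h2 : min j s = j := by omega
        rw [h1, h2]
        push_cast [hle]
        ring
      have hdiff : ∑ x ∈ Tc (j+1) \ Tc j, (f (insert x Ss) - f Ss) ≤ (c (j+1) - c j) * d j := by
        have := Finset.sum_le_card_nsmul _ _ _ hbound
        rw [nsmul_eq_mul] at this
        rw [← hcardeq]
        exact this
      have := ih hj'
      rw [Finset.sum_range_succ]
      linarith
  -- combine everything
  have habel := abel_bound p c d hd0 hdmono hcmono hcp hc0 s
  have hmain : ∑ x ∈ T \ Ss, (f (insert x Ss) - f Ss) ≤ p * f Ss := by
    have := hkey s le_rfl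
    rw [hTcs] at this
    rw [hsum_d] at habel
    linarith
  have hunion : f (Ss ∪ (T \ Ss)) ≤ f Ss + ∑ x ∈ T \ Ss, (f (insert x Ss) - f Ss) :=
    union_marginal hsub (T \ Ss) Ss Finset.sdiff_disjoint
  have hTle : f T ≤ f (Ss ∪ (T \ Ss)) := by
    apply hmono
    intro x hx
    by_cases hxs : x ∈ Ss
    · exact Finset.mem_union_left _ hxs
    · exact Finset.mem_union_right _ (Finset.mem_sdiff.2 ⟨hx, hxs⟩)
  have hfinal : f T ≤ (p + 1) * f Ss := by nlinarith
  rw [div_mul_eq_mul_div, div_le_iff₀ (by linarith : (0:ℝ) < p + 1)]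
  nlinarith
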